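/- Let G be a finite simple graph, let C be an isolating cycle of G, let vw be an edge of C, and let x be a vertex of G not on C that is adjacent in G to both v and w. Then G contains an isolating cycle C' with vertex set V(C) ∪ {x}; in particular, C' is one edge longer than C and contains all vertices of C. -/

import Mathlib

/-! A cycle is isolating exactly when every edge of `G` has an end on it, and this survives
adding vertices to the cycle. Deleting the edge `vw` from `C` leaves a `w`–`v` path through all
vertices of `C`, and the detour `v x w` closes it into a cycle with one more vertex. -/

/-- A closed walk `C` in `G` is an *isolating cycle* if it is a cycle and every
connected component of the graph obtained from `G` by deleting the vertices of
`C` consists of a single vertex. -/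
def SimpleGraph.IsIsolatingCycle {V : Type*} (G : SimpleGraph V) {u : V}
    (C : G.Walk u u) : Prop :=
  C.IsCycle ∧
    ∀ K : (G.induce {v : V | v ∉ C.support}).ConnectedComponent,
      ∃ x, K.supp = {x}

namespace SimpleGraph

variable {V : Type*} {G : SimpleGraph V}

theorem forall_connectedComponent_supp_eq_singleton_iff {H : SimpleGraph V} :
    (∀ K : H.ConnectedComponent, ∃ x, K.supp = {x}) ↔ H = ⊥ := by
  refine ⟨fun h => eq_bot_iff_forall_not_adj.mpr fun a b hab => ?_, ?_⟩
  · obtain ⟨z, hz⟩ := h (H.connectedComponentMk a)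
    have ha : a ∈ (H.connectedComponentMk a).supp := rfl
    have hb : b ∈ (H.connectedComponentMk a).supp :=
      ConnectedComponent.sound hab.symm.reachable
    rw [hz] at ha hb
    exact hab.ne (ha.trans hb.symm)
  · rintro rfl K
    induction K using ConnectedComponent.ind with
    | h a =>
      refine ⟨a, Set.ext fun b => ?_⟩
      simp [ConnectedComponent.mem_supp_iff, ConnectedComponent.eq, reachable_bot]

theorem isIsolatingCycle_iff {u : V} {C : G.Walk u u} :
    G.IsIsolatingCycle C ↔ C.IsCycle ∧ ∀ a b, G.Adj a b → a ∈ C.support ∨ b ∈ C.support := by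
  simp only [IsIsolatingCycle, forall_connectedComponent_supp_eq_singleton_iff,
    eq_bot_iff_forall_not_adj, comap_adj, Function.Embedding.coe_subtype, Subtype.forall,
    Set.mem_ofPred_eq]
  grind

theorem IsIsolatingCycle.of_support_subset {u u' : V} {C : G.Walk u u} {C' : G.Walk u' u'}
    (hC : G.IsIsolatingCycle C) (hC' : C'.IsCycle) (hsub : ∀ y ∈ C.support, y ∈ C'.support) :
    G.IsIsolatingCycle C' := by
  rw [isIsolatingCycle_iff] at hC ⊢
  exact ⟨hC', fun a b hab => (hC.2 a b hab).imp (hsub a) (hsub b)⟩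

namespace Walk

theorem IsCycle.snd_eq_or_penultimate_eq_of_mem_edges {u w : V} {c : G.Walk u u}
    (hc : c.IsCycle) (he : s(u, w) ∈ c.edges) : c.snd = w ∨ c.penultimate = w := by
  have htail : ¬c.tail.Nil := by
    have := length_tail_add_one hc.not_nil
    have := hc.three_le_length
    rw [← length_eq_zero_iff]
    omega
  rw [← c.cons_tail_eq hc.not_nil, edges_cons, List.mem_cons] at he
  rcases he with he | he
  · exact .inl (Sym2.congr_right.mp he).symm
  · right
    rw [hc.isPath_tail.eq_penultimate_of_mem_edges he,
      ← penultimate_cons_of_not_nil (c.adj_snd hc.not_nil) _ htail, c.cons_tail_eq hc.not_nil]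

theorem IsCycle.exists_isPath_of_snd_eq {u w : V} {c : G.Walk u u} (hc : c.IsCycle)
    (hw : c.snd = w) :
    ∃ q : G.Walk w u, q.IsPath ∧ q.length + 1 = c.length ∧ ∀ y, y ∈ q.support ↔ y ∈ c.support := by
  subst hw
  refine ⟨c.tail, hc.isPath_tail, length_tail_add_one hc.not_nil, fun y => ?_⟩
  rw [support_tail_of_not_nil _ hc.not_nil, c.mem_support_iff]
  have := c.end_mem_tail_support hc.not_nil
  grind

theorem IsCycle.exists_isPath_of_mem_edges [DecidableEq V] {u v w : V} {c : G.Walk u u}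
    (hc : c.IsCycle) (he : s(v, w) ∈ c.edges) :
    ∃ q : G.Walk w v, q.IsPath ∧ q.length + 1 = c.length ∧ ∀ y, y ∈ q.support ↔ y ∈ c.support := by
  have hv : v ∈ c.support := c.fst_mem_support_of_mem_edges he
  set d := c.rotate v hv
  have hd : d.IsCycle := hc.rotate hv
  suffices ∃ q : G.Walk w v, q.IsPath ∧ q.length + 1 = d.length ∧
      ∀ y, y ∈ q.support ↔ y ∈ d.support by
    simpa only [d, length_rotate, mem_support_rotate_iff] using this
  rcases hd.snd_eq_or_penultimate_eq_of_mem_edges ((c.rotate_edges v hv).mem_iff.mpr he) with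
    hw | hw
  · exact hd.exists_isPath_of_snd_eq hw
  · simpa only [length_reverse, support_reverse, List.mem_reverse] using
      hd.reverse.exists_isPath_of_snd_eq ((snd_reverse d).trans hw)

theorem IsPath.isCycle_cons_cons {v w x : V} {q : G.Walk w v} (hq : q.IsPath) (hvw : v ≠ w)
    (hvx : G.Adj v x) (hxw : G.Adj x w) (hx : x ∉ q.support) :
    (cons hvx (cons hxw q)).IsCycle := by
  rw [cons_isCycle_iff, cons_isPath_iff, edges_cons, List.mem_cons]
  refine ⟨⟨hq, hx⟩, ?_⟩
  rintro (he | he)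
  · rcases Sym2.eq_iff.mp he with ⟨hvx', -⟩ | ⟨hvw', -⟩
    · exact hvx.ne hvx'
    · exact hvw hvw'
  · exact hx (q.snd_mem_support_of_mem_edges he)

end Walk

end SimpleGraph

open SimpleGraph Walk

theorem isolating_extend_over_edge_general {V : Type*} (G : SimpleGraph V)
    {u : V} (C : G.Walk u u) (hC : G.IsIsolatingCycle C)
    (v w x : V) (hvw : s(v, w) ∈ C.edges)
    (hx : x ∉ C.support) (hxv : G.Adj x v) (hxw : G.Adj x w) :
    ∃ (u' : V) (C' : G.Walk u' u'),
      G.IsIsolatingCycle C' ∧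
      (∀ y, y ∈ C'.support ↔ y ∈ C.support ∨ y = x) ∧
      C'.length = C.length + 1 := by
  classical
  obtain ⟨q, hq, hlen, hsupp⟩ := hC.1.exists_isPath_of_mem_edges hvw
  have hxq : x ∉ q.support := by rwa [hsupp]
  have hsupp' : ∀ y, y ∈ (cons hxv.symm (cons hxw q)).support ↔ y ∈ C.support ∨ y = x := by
    intro y
    rw [← hsupp, support_cons, support_cons, List.mem_cons, List.mem_cons]
    have hv := q.end_mem_support
    grind
  have hcycle := hq.isCycle_cons_cons (C.adj_of_mem_edges hvw).ne hxv.symm hxw hxq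
  exact ⟨v, _, hC.of_support_subset hcycle fun y hy => (hsupp' y).2 (.inl hy), hsupp',
    by simp [← hlen]⟩

/-- Let `G` be a finite simple graph, `C` an isolating cycle of `G`, `vw` an
edge of `C`, and `x` a vertex of `G` not on `C` that is adjacent in `G` to
both `v` and `w`. Then `G` contains an isolating cycle `C'` whose vertex set
is `V(C) ∪ {x}`; in particular, `C'` is one edge longer than `C` and contains
all vertices of `C`. -/
theorem isolating_extend_over_edge {V : Type*} [Fintype V] (G : SimpleGraph V)
    {u : V} (C : G.Walk u u) (hC : G.IsIsolatingCycle C)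
    (v w x : V) (hvw : s(v, w) ∈ C.edges)
    (hx : x ∉ C.support) (hxv : G.Adj x v) (hxw : G.Adj x w) :
    ∃ (u' : V) (C' : G.Walk u' u'),
      G.IsIsolatingCycle C' ∧
      (∀ y, y ∈ C'.support ↔ y ∈ C.support ∨ y = x) ∧
      C'.length = C.length + 1 :=
  isolating_extend_over_edge_general G C hC v w x hvw hx hxv hxw
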